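/- Let u and v be nonempty finite words over a totally ordered alphabet such that u^ω < v^ω in the lexicographic order on infinite words. Then u^ω < (uv)^ω < (vu)^ω < v^ω. -/
import Mathlib
set_option linter.unusedSectionVars false

variable {A : Type*} [LinearOrder A] [Inhabited A]

/-- The infinite periodic word `u^ω = uuu⋯`, as a function `ℕ → A`. -/
def omegaPow (u : List A) : ℕ → A := fun n => u.getD (n % u.length) default

/-- Lexicographic order on infinite words: `s < t` iff at the first position where
they differ, `s` has the smaller letter. -/
def lexLt (s t : ℕ → A) : Prop := ∃ k, (∀ i < k, s i = t i) ∧ s k < t k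

/-- Prepend a finite word to an infinite word. -/
def cat (w : List A) (z : ℕ → A) : ℕ → A :=
  fun n => if n < w.length then w.getD n default else z (n - w.length)

theorem cat_lt (w : List A) (z : ℕ → A) {n : ℕ} (h : n < w.length) :
    cat w z n = w.getD n default := if_pos h

theorem cat_ge (w : List A) (z : ℕ → A) {n : ℕ} (h : ¬ n < w.length) :
    cat w z n = z (n - w.length) := if_neg h

theorem omegaPow_lt (v : List A) {n : ℕ} (h : n < v.length) :
    omegaPow v n = v.getD n default := by
  simp [omegaPow, Nat.mod_eq_of_lt h]

theorem omegaPow_period (v : List A) (n : ℕ) :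
    omegaPow v (n + v.length) = omegaPow v n := by
  simp [omegaPow, Nat.add_mod_right]

theorem lexLt_trans {s t r : ℕ → A} (h1 : lexLt s t) (h2 : lexLt t r) : lexLt s r := by
  obtain ⟨k1, a1, b1⟩ := h1
  obtain ⟨k2, a2, b2⟩ := h2
  rcases lt_trichotomy k1 k2 with h | h | h
  · exact ⟨k1, fun i hi => (a1 i hi).trans (a2 i (hi.trans h)), (a2 k1 h) ▸ b1⟩
  · subst h
    exact ⟨k1, fun i hi => (a1 i hi).trans (a2 i hi), b1.trans b2⟩
  · exact ⟨k2, fun i hi => (a1 i (hi.trans h)).trans (a2 i hi), (a1 k2 h) ▸ b2⟩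

theorem lexLt_asymm {s t : ℕ → A} (h1 : lexLt s t) (h2 : lexLt t s) : False := by
  obtain ⟨k, _, hk⟩ := lexLt_trans h1 h2
  exact lt_irrefl _ hk

theorem lexLt_total {s t : ℕ → A} (h : s ≠ t) : lexLt s t ∨ lexLt t s := by
  have hne : ∃ n, s n ≠ t n := by
    by_contra hc
    push_neg at hc
    exact h (funext hc)
  classical
  let k := Nat.find hne
  have hk : s k ≠ t k := Nat.find_spec hne
  have h1 : ∀ i < k, s i = t i := fun i hi => by
    by_contra hc
    exact absurd hi (not_lt.mpr (Nat.find_le hc))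
  rcases hk.lt_or_gt with h' | h'
  · exact Or.inl ⟨k, h1, h'⟩
  · exact Or.inr ⟨k, fun i hi => (h1 i hi).symm, h'⟩

theorem cat_lt_cat_iff (w : List A) (s t : ℕ → A) :
    lexLt (cat w s) (cat w t) ↔ lexLt s t := by
  constructor
  · rintro ⟨k, h1, h2⟩
    have hk : ¬ k < w.length := by
      intro hlt
      rw [cat_lt w s hlt, cat_lt w t hlt] at h2
      exact lt_irrefl _ h2
    refine ⟨k - w.length, fun i hi => ?_, ?_⟩
    · have hiw : i + w.length < k := Nat.lt_sub_iff_add_lt.mp hi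
      have := h1 (i + w.length) hiw
      rwa [cat_ge w s (by omega), cat_ge w t (by omega), Nat.add_sub_cancel] at this
    · rwa [cat_ge w s hk, cat_ge w t hk] at h2
  · rintro ⟨k, h1, h2⟩
    refine ⟨k + w.length, fun i hi => ?_, ?_⟩
    · by_cases hiw : i < w.length
      · rw [cat_lt w s hiw, cat_lt w t hiw]
      · rw [cat_ge w s hiw, cat_ge w t hiw]
        exact h1 _ (by omega)
    · rw [cat_ge w s (by omega), cat_ge w t (by omega), Nat.add_sub_cancel]
      exact h2

theorem omegaPow_append (x y : List A) :
    omegaPow (x ++ y) = cat x (omegaPow (y ++ x)) := by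
  rcases eq_or_ne (x ++ y) [] with h | h
  · rw [List.append_eq_nil_iff] at h
    rcases h with ⟨hx, hy⟩
    subst hx; subst hy
    rfl
  have hL : 0 < x.length + y.length := by
    have := List.length_pos_iff.mpr h
    simpa using this
  set L := x.length + y.length with hLdef
  funext n
  by_cases hn : n < x.length
  · rw [cat_lt x _ hn]
    show (x ++ y).getD (n % (x ++ y).length) default = _
    rw [List.length_append, ← hLdef, Nat.mod_eq_of_lt (by omega)]
    exact List.getD_append x y default n hn
  · rw [cat_ge x _ hn]
    set m := n - x.length with hm
    show (x ++ y).getD (n % (x ++ y).length) default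
        = (y ++ x).getD (m % (y ++ x).length) default
    rw [List.length_append, List.length_append, ← hLdef,
      show y.length + x.length = L by omega]
    have hn' : n = m + x.length := by omega
    set r := m % L with hr
    have hrL : r < L := Nat.mod_lt _ hL
    have hdm : m = L * (m / L) + r := by rw [hr]; exact (Nat.div_add_mod m L).symm
    have key : n % L = (r + x.length) % L := by
      rw [hn', hdm]
      rw [show L * (m / L) + r + x.length = L * (m / L) + (r + x.length) by ring]
      exact Nat.mul_add_mod _ _ _
    rcases lt_or_ge r y.length with hry | hry
    · have : (r + x.length) % L = r + x.length := Nat.mod_eq_of_lt (by omega)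
      rw [key, this, List.getD_append_right x y default _ (by omega),
        Nat.add_sub_cancel, List.getD_append y x default r hry]
    · have h2L : r + x.length - L < L := by omega
      have : (r + x.length) % L = r + x.length - L := by
        rw [Nat.mod_eq_sub_mod (by omega), Nat.mod_eq_of_lt h2L]
      rw [key, this, show r + x.length - L = r - y.length by omega,
        List.getD_append x y default _ (by omega),
        List.getD_append_right y x default r hry]

theorem omegaPow_self (u : List A) : omegaPow u = cat u (omegaPow u) := by
  have := omegaPow_append u ([] : List A)
  simpa using this

theorem cat_append (x y : List A) (z : ℕ → A) :
    cat (x ++ y) z = cat x (cat y z) := by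
  funext n
  simp only [cat, List.length_append]
  by_cases h1 : n < x.length
  · rw [if_pos (by omega), if_pos h1, List.getD_append x y default n h1]
  · rw [if_neg h1]
    by_cases h2 : n < x.length + y.length
    · rw [if_pos h2, if_pos (by omega : n - x.length < y.length),
        List.getD_append_right x y default n (by omega)]
    · rw [if_neg h2, if_neg (by omega : ¬ n - x.length < y.length)]
      congr 1
      omega

/-- Key lemma B: if `z < v^ω` then `z < v·z`. -/
theorem lt_cat_self (v : List A) (hv : v ≠ []) :
    ∀ k (z : ℕ → A), (∀ i < k, z i = omegaPow v i) → z k < omegaPow v k →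
      lexLt z (cat v z) := by
  have hm : 0 < v.length := List.length_pos_iff.mpr hv
  intro k
  induction k using Nat.strong_induction_on with
  | _ k IH =>
    intro z h1 h2
    by_cases hk : k < v.length
    · refine ⟨k, fun i hi => ?_, ?_⟩
      · rw [h1 i hi, cat_lt v z (hi.trans hk), omegaPow_lt v (hi.trans hk)]
      · rwa [cat_lt v z hk, ← omegaPow_lt v hk]
    · set z' : ℕ → A := fun n => z (n + v.length) with hz'
      have hz : z = cat v z' := by
        funext n
        by_cases hn : n < v.length
        · rw [cat_lt v z' hn, ← omegaPow_lt v hn, h1 n (by omega)]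
        · rw [cat_ge v z' hn]
          show z n = z (n - v.length + v.length)
          congr 1
          omega
      have ha : ∀ i < k - v.length, z' i = omegaPow v i := by
        intro i hi
        show z (i + v.length) = _
        rw [h1 (i + v.length) (by omega), omegaPow_period]
      have hb : z' (k - v.length) < omegaPow v (k - v.length) := by
        show z (k - v.length + v.length) < _
        rw [show k - v.length + v.length = k by omega, ← omegaPow_period v (k - v.length),
          show k - v.length + v.length = k by omega]
        exact h2
      have := (cat_lt_cat_iff v z' (cat v z')).mpr (IH (k - v.length) (by omega) z' ha hb)
      rwa [← hz] at this

/-- Key lemma B': if `v^ω < z` then `v·z < z`. -/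
theorem cat_self_lt (v : List A) (hv : v ≠ []) :
    ∀ k (z : ℕ → A), (∀ i < k, z i = omegaPow v i) → omegaPow v k < z k →
      lexLt (cat v z) z := by
  have hm : 0 < v.length := List.length_pos_iff.mpr hv
  intro k
  induction k using Nat.strong_induction_on with
  | _ k IH =>
    intro z h1 h2
    by_cases hk : k < v.length
    · refine ⟨k, fun i hi => ?_, ?_⟩
      · rw [h1 i hi, cat_lt v z (hi.trans hk), omegaPow_lt v (hi.trans hk)]
      · rwa [cat_lt v z hk, ← omegaPow_lt v hk]
    · set z' : ℕ → A := fun n => z (n + v.length) with hz'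
      have hz : z = cat v z' := by
        funext n
        by_cases hn : n < v.length
        · rw [cat_lt v z' hn, ← omegaPow_lt v hn, h1 n (by omega)]
        · rw [cat_ge v z' hn]
          show z n = z (n - v.length + v.length)
          congr 1
          omega
      have ha : ∀ i < k - v.length, z' i = omegaPow v i := by
        intro i hi
        show z (i + v.length) = _
        rw [h1 (i + v.length) (by omega), omegaPow_period]
      have hb : omegaPow v (k - v.length) < z' (k - v.length) := by
        show _ < z (k - v.length + v.length)
        rw [show k - v.length + v.length = k by omega, ← omegaPow_period v (k - v.length),
          show k - v.length + v.length = k by omega]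
        exact h2
      have := (cat_lt_cat_iff v (cat v z') z').mpr (IH (k - v.length) (by omega) z' ha hb)
      rwa [← hz] at this

/-- Key lemma C: if `z < w·z` then `z < w^ω`. -/
theorem lt_omegaPow (w : List A) (hw : w ≠ []) :
    ∀ k (z : ℕ → A), (∀ i < k, z i = cat w z i) → z k < cat w z k →
      lexLt z (omegaPow w) := by
  have hm : 0 < w.length := List.length_pos_iff.mpr hw
  intro k
  induction k using Nat.strong_induction_on with
  | _ k IH =>
    intro z h1 h2
    by_cases hk : k < w.length
    · refine ⟨k, fun i hi => ?_, ?_⟩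
      · rw [h1 i hi, cat_lt w z (hi.trans hk), omegaPow_lt w (hi.trans hk)]
      · rwa [omegaPow_lt w hk, ← cat_lt w z hk]
    · set z' : ℕ → A := fun n => z (n + w.length) with hz'
      have hpre : ∀ i < w.length, z i = w.getD i default := fun i hi => by
        rw [h1 i (by omega), cat_lt w z hi]
      have hz : z = cat w z' := by
        funext n
        by_cases hn : n < w.length
        · rw [cat_lt w z' hn, hpre n hn]
        · rw [cat_ge w z' hn]
          show z n = z (n - w.length + w.length)
          congr 1
          omega
      have ha : ∀ i < k - w.length, z' i = cat w z' i := by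
        intro i hi
        have e1 : z' i = z i := by
          show z (i + w.length) = z i
          rw [h1 (i + w.length) (by omega), cat_ge w z (by omega), Nat.add_sub_cancel]
        rw [e1, ← hz]
      have hb : z' (k - w.length) < cat w z' (k - w.length) := by
        rw [← hz]
        show z (k - w.length + w.length) < z (k - w.length)
        rw [show k - w.length + w.length = k by omega]
        have := h2
        rwa [cat_ge w z hk] at this
      have := (cat_lt_cat_iff w z' (omegaPow w)).mpr (IH (k - w.length) (by omega) z' ha hb)
      rwa [← hz, ← omegaPow_self w] at this

/-- Key lemma C': if `w·z < z` then `w^ω < z`. -/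
theorem omegaPow_lt' (w : List A) (hw : w ≠ []) :
    ∀ k (z : ℕ → A), (∀ i < k, z i = cat w z i) → cat w z k < z k →
      lexLt (omegaPow w) z := by
  have hm : 0 < w.length := List.length_pos_iff.mpr hw
  intro k
  induction k using Nat.strong_induction_on with
  | _ k IH =>
    intro z h1 h2
    by_cases hk : k < w.length
    · refine ⟨k, fun i hi => ?_, ?_⟩
      · rw [h1 i hi, cat_lt w z (hi.trans hk), omegaPow_lt w (hi.trans hk)]
      · rwa [omegaPow_lt w hk, ← cat_lt w z hk]
    · set z' : ℕ → A := fun n => z (n + w.length) with hz'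
      have hpre : ∀ i < w.length, z i = w.getD i default := fun i hi => by
        rw [h1 i (by omega), cat_lt w z hi]
      have hz : z = cat w z' := by
        funext n
        by_cases hn : n < w.length
        · rw [cat_lt w z' hn, hpre n hn]
        · rw [cat_ge w z' hn]
          show z n = z (n - w.length + w.length)
          congr 1
          omega
      have ha : ∀ i < k - w.length, z' i = cat w z' i := by
        intro i hi
        have e1 : z' i = z i := by
          show z (i + w.length) = z i
          rw [h1 (i + w.length) (by omega), cat_ge w z (by omega), Nat.add_sub_cancel]
        rw [e1, ← hz]
      have hb : cat w z' (k - w.length) < z' (k - w.length) := by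
        rw [← hz]
        show z (k - w.length) < z (k - w.length + w.length)
        rw [show k - w.length + w.length = k by omega]
        have := h2
        rwa [cat_ge w z hk] at this
      have := (cat_lt_cat_iff w (omegaPow w) z').mpr (IH (k - w.length) (by omega) z' ha hb)
      rwa [← hz, ← omegaPow_self w] at this

/-- Wrappers taking `lexLt` hypotheses. -/
theorem lt_cat_self' (v : List A) (hv : v ≠ []) (z : ℕ → A)
    (h : lexLt z (omegaPow v)) : lexLt z (cat v z) := by
  obtain ⟨k, h1, h2⟩ := h; exact lt_cat_self v hv k z h1 h2

theorem cat_self_lt' (v : List A) (hv : v ≠ []) (z : ℕ → A)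
    (h : lexLt (omegaPow v) z) : lexLt (cat v z) z := by
  obtain ⟨k, h1, h2⟩ := h; exact cat_self_lt v hv k z (fun i hi => (h1 i hi).symm) h2

theorem lt_omegaPow' (w : List A) (hw : w ≠ []) (z : ℕ → A)
    (h : lexLt z (cat w z)) : lexLt z (omegaPow w) := by
  obtain ⟨k, h1, h2⟩ := h; exact lt_omegaPow w hw k z h1 h2

theorem omegaPow_lt'' (w : List A) (hw : w ≠ []) (z : ℕ → A)
    (h : lexLt (cat w z) z) : lexLt (omegaPow w) z := by
  obtain ⟨k, h1, h2⟩ := h; exact omegaPow_lt' w hw k z (fun i hi => (h1 i hi).symm) h2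

/-- (Bergman) If `u^ω < v^ω` then `u^ω < (uv)^ω < (vu)^ω < v^ω`. -/
theorem omegaPow_lt_chain (u v : List A) (hu : u ≠ []) (hv : v ≠ [])
    (hlt : lexLt (omegaPow u) (omegaPow v)) :
    lexLt (omegaPow u) (omegaPow (u ++ v)) ∧
    lexLt (omegaPow (u ++ v)) (omegaPow (v ++ u)) ∧
    lexLt (omegaPow (v ++ u)) (omegaPow v) := by
  have huv : u ++ v ≠ [] := by simp [hu]
  have hvu : v ++ u ≠ [] := by simp [hv]
  set s := omegaPow u with hs
  set t := omegaPow v with ht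
  set P := omegaPow (u ++ v) with hP
  set Q := omegaPow (v ++ u) with hQ
  have hPQ : P = cat u Q := omegaPow_append u v
  have hQP : Q = cat v P := omegaPow_append v u
  -- Part 1 : s < P
  have p1 : lexLt s P := by
    have h1 : lexLt s (cat v s) := lt_cat_self' v hv s hlt
    have h2 : lexLt (cat u s) (cat u (cat v s)) := (cat_lt_cat_iff u s (cat v s)).mpr h1
    rw [← cat_append, ← omegaPow_self u] at h2
    exact lt_omegaPow' (u ++ v) huv s h2
  -- Part 3 : Q < t
  have p3 : lexLt Q t := by
    have h1 : lexLt (cat u t) t := cat_self_lt' u hu t hlt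
    have h2 : lexLt (cat v (cat u t)) (cat v t) := (cat_lt_cat_iff v (cat u t) t).mpr h1
    rw [← cat_append, ← omegaPow_self v] at h2
    exact omegaPow_lt'' (v ++ u) hvu t h2
  -- Part 2 : P < Q
  have p2 : lexLt P Q := by
    by_contra hc
    -- from ¬ P < Q deduce ¬ P < t
    have h3 : ¬ lexLt P t := fun h => hc (hQP ▸ lt_cat_self' v hv P h)
    have h4 : ¬ lexLt s Q := fun h => hc (hPQ ▸ cat_self_lt' u hu Q h)
    -- from ¬ P < t deduce ¬ Q < t
    have h5 : ¬ lexLt Q t := by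
      intro h
      apply h3
      rw [hQP, ht, omegaPow_self v] at h
      exact (cat_lt_cat_iff v P (omegaPow v)).mp h
    exact h5 p3
  exact ⟨p1, p2, p3⟩
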